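/- If the N interpolation points X_1,...,X_N are the roots of the N-th Legendre polynomial (shifted to [0,1]), then the mass matrix M with entries M_{ij} = ∫_0^1 h_i(z) h_j(z) dz is diagonal, i.e., M_{ij} = 0 whenever i ≠ j. -/

import Mathlib

/-! The product `h_i h_j` with `i ≠ j` vanishes at every node, so it is divisible by the node
polynomial `∏ₖ (X - X_k)`. A polynomial of degree `N` vanishing at the `N` nodes is a nonzero
multiple of the node polynomial, so `h_i h_j = P q`; since `h_i h_j` has degree `2N - 2`, the
cofactor `q` has degree `< N` and the orthogonality of `P` kills the integral. -/

open Polynomial intervalIntegral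

namespace Lagrange

variable {F ι : Type*} [Field F] {s : Finset ι} {v : ι → F}

theorem nodal_dvd_of_eval_eq_zero (hvs : Set.InjOn v s) {f : F[X]}
    (hf : ∀ i ∈ s, f.eval (v i) = 0) : nodal s v ∣ f := by
  rw [nodal_eq]
  exact Finset.prod_dvd_of_coprime
    (fun a ha b hb hab =>
      isCoprime_X_sub_C_of_isUnit_sub (sub_ne_zero_of_ne (hvs.ne ha hb hab)).isUnit)
    fun i hi => dvd_iff_isRoot.mpr (hf i hi)

theorem associated_nodal_of_eval_eq_zero (hvs : Set.InjOn v s) {P : F[X]} (hP : P ≠ 0)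
    (hdeg : P.natDegree = s.card) (hroots : ∀ i ∈ s, P.eval (v i) = 0) :
    Associated (nodal s v) P :=
  associated_of_dvd_of_natDegree_le (nodal_dvd_of_eval_eq_zero hvs hroots) hP
    (by rw [natDegree_nodal, hdeg])

variable [DecidableEq ι] {i j : ι}

theorem nodal_dvd_basis_mul_basis (hvs : Set.InjOn v s) (hij : i ≠ j) :
    nodal s v ∣ Lagrange.basis s v i * Lagrange.basis s v j := by
  refine nodal_dvd_of_eval_eq_zero hvs fun k hk => ?_
  rcases eq_or_ne k i with rfl | hki
  · rw [eval_mul, eval_basis_of_ne hij.symm hk, mul_zero]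
  · rw [eval_mul, eval_basis_of_ne hki.symm hk, zero_mul]

theorem degree_basis_mul_basis_lt (hvs : Set.InjOn v s) (hi : i ∈ s) (hj : j ∈ s) :
    (Lagrange.basis s v i * Lagrange.basis s v j).degree < s.card + s.card := by
  have hs : 0 < s.card := Finset.card_pos.mpr ⟨i, hi⟩
  rw [degree_mul, degree_basis hvs hi, degree_basis hvs hj]
  exact_mod_cast (by omega : s.card - 1 + (s.card - 1) < s.card + s.card)

end Lagrange

theorem integral_eval_eq_zero_of_dvd {P f : ℝ[X]} {n : WithBot ℕ} {a b : ℝ}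
    (hPorth : ∀ q : ℝ[X], q.degree < n → ∫ x in a..b, P.eval x * q.eval x = 0)
    (hdvd : P ∣ f) (hf : f.degree < P.degree + n) :
    ∫ x in a..b, f.eval x = 0 := by
  obtain ⟨q, rfl⟩ := hdvd
  rcases eq_or_ne P 0 with rfl | hP
  · simp
  rw [degree_mul, WithBot.add_lt_add_iff_left (degree_eq_bot.not.mpr hP)] at hf
  simpa only [eval_mul] using hPorth q hf

theorem mass_matrix_diagonal_at_legendre_roots_general (N : ℕ)
    (P : Polynomial ℝ) (hPdeg : P.natDegree = N)
    (hPorth : ∀ q : Polynomial ℝ, q.degree < N →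
      ∫ x in (0:ℝ)..1, P.eval x * q.eval x = 0)
    (X : Fin N → ℝ) (hX : Function.Injective X)
    (hroots : ∀ i, P.eval (X i) = 0) :
    ∀ i j : Fin N, i ≠ j →
      ∫ z in (0:ℝ)..1,
        (Lagrange.basis Finset.univ X i).eval z *
        (Lagrange.basis Finset.univ X j).eval z = 0 := by
  intro i j hij
  have hXinj : Set.InjOn X (Finset.univ : Finset (Fin N)) := hX.injOn
  have hP : P ≠ 0 := by
    rintro rfl
    exact i.pos.ne (by simpa using hPdeg)
  have hnodal : Associated (Lagrange.nodal Finset.univ X) P :=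
    Lagrange.associated_nodal_of_eval_eq_zero hXinj hP (by simp [hPdeg]) fun k _ => hroots k
  simp_rw [← eval_mul]
  refine integral_eval_eq_zero_of_dvd hPorth
    (hnodal.dvd_iff_dvd_left.mp (Lagrange.nodal_dvd_basis_mul_basis hXinj hij)) ?_
  simpa [degree_eq_natDegree hP, hPdeg] using
    Lagrange.degree_basis_mul_basis_lt hXinj (Finset.mem_univ i) (Finset.mem_univ j)

/-- If the interpolation points are the roots of a degree-`N` polynomial that is
`L²([0,1])`-orthogonal to all polynomials of lower degree (the shifted Legendre
polynomial), then the mass matrix `M_{ij} = ∫_0^1 h_i h_j` is diagonal. -/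
theorem mass_matrix_diagonal_at_legendre_roots (N : ℕ) (hN : 0 < N)
    (P : Polynomial ℝ) (hPdeg : P.natDegree = N)
    (hPorth : ∀ q : Polynomial ℝ, q.degree < N →
      ∫ x in (0:ℝ)..1, P.eval x * q.eval x = 0)
    (X : Fin N → ℝ) (hX : Function.Injective X)
    (hroots : ∀ i, P.eval (X i) = 0) (hX01 : ∀ i, X i ∈ Set.Ioo (0:ℝ) 1) :
    ∀ i j : Fin N, i ≠ j →
      ∫ z in (0:ℝ)..1,
        (Lagrange.basis Finset.univ X i).eval z *
        (Lagrange.basis Finset.univ X j).eval z = 0 :=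
  mass_matrix_diagonal_at_legendre_roots_general N P hPdeg hPorth X hX hroots
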